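/- arXiv:1905.03982 — 2 statements merged into one kernel-verified Lean document; each statement's English description precedes it below -/
import Mathlib

section
/- Let f = (r+x)^{1/2} with r = (x^2+|y|^2)^{1/2}. On the region where r+x > 0 and r > 0, the Hessian of f satisfies ∂_j ∂_k f = f^{-1} ℓ_{jk} - f^{-1} |∂f|^2 (∂_j r)(∂_k r), where ℓ_{jk} = |∂f|^2 δ_{jk} - (∂_j f)(∂_k f). -/
open EuclideanSpace

/-- The escape function `f = (r+x)^{1/2}` on `ℝ^d`. -/
noncomputable def fEsc {d : ℕ} [NeZero d] (q : EuclideanSpace ℝ (Fin d)) : ℝ :=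
  Real.sqrt (‖q‖ + q 0)

section aux
variable {d : ℕ} [NeZero d]

lemma hasFDerivAt_norm_euclid {E : Type*} [NormedAddCommGroup E] [InnerProductSpace ℝ E]
    {q : E} (hq : q ≠ 0) :
    HasFDerivAt (fun x : E => ‖x‖) (‖q‖⁻¹ • (innerSL ℝ q : E →L[ℝ] ℝ)) q := by
  have h2 := (hasStrictFDerivAt_norm_sq q).hasFDerivAt
  have hs : HasDerivAt Real.sqrt (1/(2*Real.sqrt (‖q‖^2))) (‖q‖^2) :=
    Real.hasDerivAt_sqrt (pow_ne_zero _ (norm_ne_zero_iff.2 hq))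
  have h := hs.comp_hasFDerivAt q h2
  have hfun : (Real.sqrt ∘ fun x : E => ‖x‖^2) = fun x : E => ‖x‖ := by
    funext x; simp [Real.sqrt_sq (norm_nonneg x)]
  rw [hfun] at h
  refine h.congr_fderiv ?_
  rw [Real.sqrt_sq (norm_nonneg q)]
  ext v
  simp [smul_smul]
  ring

lemma hasFDerivAt_fEsc {q : EuclideanSpace ℝ (Fin d)}
    (h1 : 0 < ‖q‖ + q 0) (h2 : 0 < ‖q‖) :
    HasFDerivAt (fEsc (d := d))
      ((2 * Real.sqrt (‖q‖ + q 0))⁻¹ •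
        (‖q‖⁻¹ • (innerSL ℝ q : EuclideanSpace ℝ (Fin d) →L[ℝ] ℝ) + EuclideanSpace.proj 0)) q := by
  have hp : HasFDerivAt (𝕜 := ℝ) (fun x : EuclideanSpace ℝ (Fin d) => (x 0 : ℝ))
      (EuclideanSpace.proj (0 : Fin d)) q := by
    exact ContinuousLinearMap.hasFDerivAt (𝕜 := ℝ) (f := (EuclideanSpace.proj (0 : Fin d) : EuclideanSpace ℝ (Fin d) →L[ℝ] ℝ))
  have hm : HasFDerivAt (fun x : EuclideanSpace ℝ (Fin d) => ‖x‖ + x 0)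
      (‖q‖⁻¹ • (innerSL ℝ q : EuclideanSpace ℝ (Fin d) →L[ℝ] ℝ) + EuclideanSpace.proj 0) q :=
    (hasFDerivAt_norm_euclid (norm_pos_iff.mp h2)).add hp
  have hs : HasDerivAt Real.sqrt (1/(2*Real.sqrt (‖q‖ + q 0))) (‖q‖ + q 0) :=
    Real.hasDerivAt_sqrt h1.ne'
  have h := hs.comp_hasFDerivAt q hm
  refine h.congr_fderiv ?_
  rw [one_div]

lemma fderiv_fEsc_apply {q : EuclideanSpace ℝ (Fin d)}
    (h1 : 0 < ‖q‖ + q 0) (h2 : 0 < ‖q‖) (k : Fin d) :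
    fderiv ℝ (fEsc (d := d)) q (EuclideanSpace.single k 1)
      = (2 * Real.sqrt (‖q‖ + q 0))⁻¹ * (q k * ‖q‖⁻¹ + if k = 0 then 1 else 0) := by
  rw [(hasFDerivAt_fEsc h1 h2).fderiv]
  simp [EuclideanSpace.inner_single_right, EuclideanSpace.single_apply, real_inner_comm]
  by_cases hk : k = 0
  · simp [hk]; ring
  · simp [hk, Ne.symm hk, mul_comm]

lemma myInv {E : Type*} [NormedAddCommGroup E] [NormedSpace ℝ E] {f : E → ℝ}
    {f' : E →L[ℝ] ℝ} {x : E} (hf : HasFDerivAt f f' x) (h : f x ≠ 0) :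
    HasFDerivAt (fun y => (f y)⁻¹) ((-((f x)^2)⁻¹) • f') x := by
  have h2 := (hasDerivAt_inv h).comp_hasFDerivAt x hf
  exact h2

end aux

/-- Hessian identity
`∂_j ∂_k f = f⁻¹ ℓ_{jk} - f⁻¹ |∂f|² (∂_j r)(∂_k r)` with
`ℓ_{jk} = |∂f|² δ_{jk} - (∂_j f)(∂_k f)`, on `{r+x>0, r>0}`. -/
theorem stmt_3 (d : ℕ) [NeZero d] (hd : 2 ≤ d)
    (p : EuclideanSpace ℝ (Fin d)) (h1 : 0 < ‖p‖ + p 0) (h2 : 0 < ‖p‖)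
    (j k : Fin d) :
    fderiv ℝ (fun q : EuclideanSpace ℝ (Fin d) =>
        fderiv ℝ (fEsc (d := d)) q (EuclideanSpace.single k 1)) p (EuclideanSpace.single j 1)
      = (fEsc p)⁻¹ *
          ((∑ i : Fin d, (fderiv ℝ (fEsc (d := d)) p (EuclideanSpace.single i 1)) ^ 2) *
              (if j = k then 1 else 0)
            - fderiv ℝ (fEsc (d := d)) p (EuclideanSpace.single j 1) *
                fderiv ℝ (fEsc (d := d)) p (EuclideanSpace.single k 1))
        - (fEsc p)⁻¹ *
            (∑ i : Fin d, (fderiv ℝ (fEsc (d := d)) p (EuclideanSpace.single i 1)) ^ 2) *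
            (fderiv ℝ (fun q : EuclideanSpace ℝ (Fin d) => ‖q‖) p (EuclideanSpace.single j 1)) *
            (fderiv ℝ (fun q : EuclideanSpace ℝ (Fin d) => ‖q‖) p (EuclideanSpace.single k 1)) := by
  have hp0 : p ≠ 0 := norm_pos_iff.mp h2
  -- eventual equality of the first derivative with an explicit formula
  have hU : IsOpen {q : EuclideanSpace ℝ (Fin d) | 0 < ‖q‖ + q 0 ∧ 0 < ‖q‖} := by
    have hc : Continuous fun q : EuclideanSpace ℝ (Fin d) => ‖q‖ + q 0 :=
      continuous_norm.add ((EuclideanSpace.proj (0 : Fin d) : EuclideanSpace ℝ (Fin d) →L[ℝ] ℝ).continuous)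
    exact (isOpen_lt continuous_const hc).inter (isOpen_lt continuous_const continuous_norm)
  have hmem : {q : EuclideanSpace ℝ (Fin d) | 0 < ‖q‖ + q 0 ∧ 0 < ‖q‖} ∈ nhds p :=
    hU.mem_nhds ⟨h1, h2⟩
  have hev : (fun q : EuclideanSpace ℝ (Fin d) =>
        fderiv ℝ (fEsc (d := d)) q (EuclideanSpace.single k 1))
      =ᶠ[nhds p] (fun q => (2 * Real.sqrt (‖q‖ + q 0))⁻¹ *
        (q k * ‖q‖⁻¹ + if k = 0 then 1 else 0)) := by
    filter_upwards [hmem] with q hq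
    exact fderiv_fEsc_apply hq.1 hq.2 k
  rw [hev.fderiv_eq]
  -- derivative of the explicit formula
  have hn := hasFDerivAt_norm_euclid hp0
  have hpk : HasFDerivAt (𝕜 := ℝ) (fun x : EuclideanSpace ℝ (Fin d) => (x k : ℝ))
      (EuclideanSpace.proj k) p :=
    ContinuousLinearMap.hasFDerivAt (𝕜 := ℝ) (f := (EuclideanSpace.proj k : EuclideanSpace ℝ (Fin d) →L[ℝ] ℝ))
  have hfpos : 0 < Real.sqrt (‖p‖ + p 0) := Real.sqrt_pos.mpr h1
  have ha : HasFDerivAt (fun q : EuclideanSpace ℝ (Fin d) => (2 * Real.sqrt (‖q‖ + q 0))⁻¹)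
      ((-((2 * fEsc p)^2)⁻¹) •
        ((2:ℝ) • ((2 * Real.sqrt (‖p‖ + p 0))⁻¹ •
          (‖p‖⁻¹ • (innerSL ℝ p : EuclideanSpace ℝ (Fin d) →L[ℝ] ℝ) + EuclideanSpace.proj 0)))) p :=
    myInv ((hasFDerivAt_fEsc h1 h2).const_mul 2) (by positivity)
  have hb : HasFDerivAt (fun q : EuclideanSpace ℝ (Fin d) =>
        q k * ‖q‖⁻¹ + (if k = 0 then (1:ℝ) else 0))
      (p k • ((-(‖p‖^2)⁻¹) • (‖p‖⁻¹ • (innerSL ℝ p : EuclideanSpace ℝ (Fin d) →L[ℝ] ℝ))) +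
        (‖p‖⁻¹) • (EuclideanSpace.proj k : EuclideanSpace ℝ (Fin d) →L[ℝ] ℝ)) p :=
    (hpk.mul (myInv hn h2.ne')).add_const _
  have hg : HasFDerivAt (fun q : EuclideanSpace ℝ (Fin d) => (2 * Real.sqrt (‖q‖ + q 0))⁻¹ *
      (q k * ‖q‖⁻¹ + (if k = 0 then (1:ℝ) else 0))) _ p := ha.mul hb
  rw [hg.fderiv]
  simp only [ContinuousLinearMap.add_apply, ContinuousLinearMap.smul_apply, smul_eq_mul,
    ContinuousLinearMap.coe_smul', Pi.smul_apply, ContinuousLinearMap.neg_apply,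
    PiLp.proj_apply, innerSL_apply_apply, EuclideanSpace.inner_single_right,
    EuclideanSpace.single_apply, map_one, conj_trivial, mul_one, one_mul, nsmul_eq_mul]
  -- sum of squares of first derivatives equals (2‖p‖)⁻¹
  have hfsq : Real.sqrt (‖p‖ + p 0) ^ 2 = ‖p‖ + p 0 := Real.sq_sqrt h1.le
  have hnormsq : (‖p‖ : ℝ) ^ 2 = ∑ i, (p i) ^ 2 := by
    rw [EuclideanSpace.norm_eq, Real.sq_sqrt (by positivity)]
    simp [Real.norm_eq_abs, sq_abs]
  have hinv : ((2 * Real.sqrt (‖p‖ + p 0))⁻¹) ^ 2 = (4 * (‖p‖ + p 0))⁻¹ := by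
    rw [inv_pow]
    congr 1
    rw [mul_pow, hfsq]; ring
  have hS : ∑ i : Fin d, ((2 * Real.sqrt (‖p‖ + p 0))⁻¹ *
      (p i * ‖p‖⁻¹ + if i = 0 then (1:ℝ) else 0)) ^ 2 = (2 * ‖p‖)⁻¹ := by
    have hterm : ∀ i : Fin d, ((2 * Real.sqrt (‖p‖ + p 0))⁻¹ *
        (p i * ‖p‖⁻¹ + if i = 0 then (1:ℝ) else 0)) ^ 2
        = (((2 * Real.sqrt (‖p‖ + p 0))⁻¹) ^ 2 * (‖p‖⁻¹) ^ 2) * (p i) ^ 2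
          + (((2 * Real.sqrt (‖p‖ + p 0))⁻¹) ^ 2 * (2 * ‖p‖⁻¹)) * (if i = 0 then p i else 0)
          + ((2 * Real.sqrt (‖p‖ + p 0))⁻¹) ^ 2 * (if i = 0 then (1:ℝ) else 0) := by
      intro i; by_cases hi : i = 0 <;> simp [hi] <;> ring
    rw [Finset.sum_congr rfl (fun i _ => hterm i)]
    rw [Finset.sum_add_distrib, Finset.sum_add_distrib, ← Finset.mul_sum, ← Finset.mul_sum,
      ← Finset.mul_sum, ← hnormsq]
    simp only [Finset.sum_ite_eq', Finset.mem_univ, if_true, hinv]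
    field_simp
    ring
  simp only [fEsc]
  rw [hn.fderiv]
  simp only [fderiv_fEsc_apply h1 h2, ContinuousLinearMap.smul_apply, innerSL_apply_apply,
    EuclideanSpace.inner_single_right, map_one, conj_trivial, mul_one, smul_eq_mul]
  rw [hS]
  have e1 : (if (0:Fin d) = j then (1:ℝ) else 0) = (if j = 0 then 1 else 0) := by
    rcases eq_or_ne j 0 with h | h
    · simp [h]
    · simp [h, Ne.symm h]
  have e2 : (if k = j then (1:ℝ) else 0) = (if j = k then 1 else 0) := by
    rcases eq_or_ne j k with h | h
    · simp [h]
    · simp [h, Ne.symm h]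
  rw [e1, e2]
  have hrne : (‖p‖ : ℝ) ≠ 0 := h2.ne'
  have hsne : Real.sqrt (‖p‖ + p 0) ≠ 0 := hfpos.ne'
  generalize (if j = k then (1:ℝ) else 0) = e3
  generalize (if j = 0 then (1:ℝ) else 0) = e4
  generalize (if k = 0 then (1:ℝ) else 0) = e5
  field_simp
  ring
end

section
/- Fix δ > 0 and ν ∈ N_0, and let θ(t) = [1 - (1+t/2^ν)^{-δ}]/δ for t ≥ 0. Then for every integer k ≥ 2 there exists C_k > 0, independent of ν, such that 0 ≤ (-1)^{k-1} θ^{(k)}(t) ≤ C_k t^{-k} θ(t) for all t ≥ 1. -/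
open Real Filter


lemma iter_formula (δ a : ℝ) (hδ : 0 < δ) (ha : 0 < a) (m : ℕ) :
    ∀ t : ℝ, -a < t →
      iteratedDeriv (m + 1) (fun s : ℝ => (1 - (1 + s / a) ^ (-δ)) / δ) t
        = (-1 : ℝ) ^ m * (∏ i ∈ Finset.range m, (δ + 1 + i)) * (a⁻¹) ^ (m + 1)
            * (1 + t / a) ^ (-(δ + (m : ℝ) + 1)) := by
  induction m with
  | zero =>
    intro t ht
    have hb : 0 < 1 + t / a := by
      have : -1 < t / a := by
        rw [lt_div_iff₀ ha]; linarith
      linarith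
    have h1 : HasDerivAt (fun s : ℝ => 1 + s / a) a⁻¹ t := by
      simpa using ((hasDerivAt_id t).div_const a).const_add 1
    have h2 : HasDerivAt (fun s : ℝ => (1 + s / a) ^ (-δ))
        (a⁻¹ * -δ * (1 + t / a) ^ (-δ - 1)) t :=
      h1.rpow_const (Or.inl hb.ne')
    have h3 : HasDerivAt (fun s : ℝ => (1 - (1 + s / a) ^ (-δ)) / δ)
        ((-(a⁻¹ * -δ * (1 + t / a) ^ (-δ - 1))) / δ) t :=
      (h2.const_sub 1).div_const δ
    rw [iteratedDeriv_one, h3.deriv]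
    rw [show -(δ + (0 : ℕ) + 1) = -δ - 1 by push_cast; ring]
    field_simp
    ring_nf; rw [mul_inv_cancel₀ ha.ne']; ring
  | succ n ih =>
    intro t ht
    have hb : 0 < 1 + t / a := by
      have : -1 < t / a := by rw [lt_div_iff₀ ha]; linarith
      linarith
    rw [iteratedDeriv_succ]
    have hev : iteratedDeriv (n + 1) (fun s : ℝ => (1 - (1 + s / a) ^ (-δ)) / δ)
        =ᶠ[nhds t] fun s => (-1 : ℝ) ^ n * (∏ i ∈ Finset.range n, (δ + 1 + i)) * (a⁻¹) ^ (n + 1)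
            * (1 + s / a) ^ (-(δ + (n : ℝ) + 1)) := by
      filter_upwards [Ioi_mem_nhds ht] with s hs
      exact ih s hs
    rw [hev.deriv_eq]
    have h1 : HasDerivAt (fun s : ℝ => 1 + s / a) a⁻¹ t := by
      simpa using ((hasDerivAt_id t).div_const a).const_add 1
    have h2 : HasDerivAt (fun s : ℝ => (1 + s / a) ^ (-(δ + (n : ℝ) + 1)))
        (a⁻¹ * -(δ + (n : ℝ) + 1) * (1 + t / a) ^ (-(δ + (n : ℝ) + 1) - 1)) t :=
      h1.rpow_const (Or.inl hb.ne')
    have h3 := (h2.const_mul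
      ((-1 : ℝ) ^ n * (∏ i ∈ Finset.range n, (δ + 1 + i)) * (a⁻¹) ^ (n + 1)))
    rw [h3.deriv]
    rw [Finset.prod_range_succ,
      show -(δ + ((n : ℕ) + 1 : ℕ) + 1) = -(δ + (n : ℝ) + 1) - 1 by push_cast; ring]
    push_cast
    ring


lemma lower_small (δ : ℝ) (hδ : 0 < δ) (u : ℝ) (hu : 0 ≤ u) (hu1 : u ≤ 1) :
    min δ 1 / 2 * u ≤ 1 - (1 + u) ^ (-δ) := by
  have hb : (0:ℝ) < 1 + u := by linarith
  have key : (1 + u) ^ (-δ) ≤ 1 - min δ 1 * (u / (1 + u)) := by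
    have h1 : (1 + u) ^ (-δ) ≤ (1 + u) ^ (-(min δ 1)) := by
      apply Real.rpow_le_rpow_of_exponent_le (by linarith)
      have : min δ 1 ≤ δ := min_le_left _ _
      linarith
    have h2 : (1 + u) ^ (-(min δ 1)) = (1 - u / (1 + u)) ^ (min δ 1) := by
      rw [Real.rpow_neg hb.le, ← Real.inv_rpow hb.le]
      congr 1
      field_simp
      ring
    have h3 : (1 - u / (1 + u) : ℝ) = 1 + (-(u / (1 + u))) := by ring
    have h4 : (1 + (-(u / (1 + u)))) ^ (min δ 1) ≤ 1 + min δ 1 * (-(u / (1 + u))) := by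
      apply rpow_one_add_le_one_add_mul_self
      · have : u / (1 + u) ≤ 1 := by
          rw [div_le_one hb]; linarith
        linarith
      · exact le_min hδ.le zero_le_one |>.trans (le_refl _) |>.trans (le_refl _) |>.trans
          (le_of_eq rfl) |>.trans (le_refl _) |>.trans (le_refl _) |>.trans (le_refl _)
      · exact min_le_right _ _
    calc (1 + u) ^ (-δ) ≤ (1 + u) ^ (-(min δ 1)) := h1
      _ = (1 + (-(u / (1 + u)))) ^ (min δ 1) := by rw [h2, ← h3]
      _ ≤ 1 + min δ 1 * (-(u / (1 + u))) := h4
      _ = 1 - min δ 1 * (u / (1 + u)) := by ring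
  have h5 : u / 2 ≤ u / (1 + u) := by
    apply div_le_div_of_nonneg_left hu (by linarith) (by linarith)
  have hm : 0 ≤ min δ 1 := le_min hδ.le zero_le_one
  nlinarith [mul_le_mul_of_nonneg_left h5 hm]

lemma key_ineq (δ a t : ℝ) (hδ : 0 < δ) (ha : 1 ≤ a) (ht : 1 ≤ t) (m : ℕ) :
    min (1 - 2 ^ (-δ)) (min δ 1 / 2) * t ^ (m + 1)
      ≤ (1 - (1 + t / a) ^ (-δ)) * (a + t) ^ (m + 1) := by
  have ha0 : (0:ℝ) < a := by linarith
  have ht0 : (0:ℝ) < t := by linarith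
  set c := min (1 - 2 ^ (-δ)) (min δ 1 / 2) with hc
  rcases le_total t a with hta | hat
  · -- t ≤ a
    have hu0 : 0 ≤ t / a := by positivity
    have hu1 : t / a ≤ 1 := by rw [div_le_one ha0]; exact hta
    have h1 : min δ 1 / 2 * (t / a) ≤ 1 - (1 + t / a) ^ (-δ) :=
      lower_small δ hδ _ hu0 hu1
    have h2 : c * (t / a) ≤ 1 - (1 + t / a) ^ (-δ) :=
      le_trans (by gcongr; exact min_le_right _ _) h1
    have h3 : a * t ^ m ≤ (a + t) ^ (m + 1) := by
      calc a * t ^ m ≤ (a + t) * (a + t) ^ m := by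
            gcongr <;> linarith
        _ = (a + t) ^ (m + 1) := by ring
    have hcnn : 0 ≤ c * (t / a) := by
      have : 0 ≤ c := le_min (by
        have h2d : (2:ℝ) ^ (-δ) ≤ 1 :=
          Real.rpow_le_one_of_one_le_of_nonpos one_le_two (by linarith)
        linarith) (by positivity)
      positivity
    calc c * t ^ (m + 1) = (c * (t / a)) * (a * t ^ m) := by
          field_simp; ring
      _ ≤ (1 - (1 + t / a) ^ (-δ)) * (a + t) ^ (m + 1) := by
          apply mul_le_mul h2 h3 (by positivity) (le_trans hcnn h2)
  · -- a ≤ t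
    have hb2 : (2:ℝ) ≤ 1 + t / a := by
      have : 1 ≤ t / a := (one_le_div ha0).mpr hat
      linarith
    have h1 : (1 + t / a) ^ (-δ) ≤ 2 ^ (-δ) := by
      rw [Real.rpow_neg (by linarith), Real.rpow_neg (by norm_num)]
      apply inv_anti₀ (by positivity)
      exact Real.rpow_le_rpow (by norm_num) hb2 hδ.le
    have h2 : c ≤ 1 - (1 + t / a) ^ (-δ) :=
      le_trans (min_le_left _ _) (by linarith)
    have h3 : t ^ (m + 1) ≤ (a + t) ^ (m + 1) := by gcongr; linarith
    have hc0 : 0 ≤ c := le_min (by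
        have h2d : (2:ℝ) ^ (-δ) ≤ 1 :=
          Real.rpow_le_one_of_one_le_of_nonpos one_le_two (by linarith)
        linarith) (by positivity)
    calc c * t ^ (m + 1) ≤ (1 - (1 + t / a) ^ (-δ)) * (a + t) ^ (m + 1) := by
          apply mul_le_mul h2 h3 (by positivity) (le_trans hc0 h2)

/-- for `θ(t) = [1 - (1+t/2^ν)^{-δ}]/δ` and each `k ≥ 2` there is
`C_k > 0`, independent of `ν`, with
`0 ≤ (-1)^{k-1} θ^{(k)}(t) ≤ C_k t^{-k} θ(t)` for all `t ≥ 1`. -/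
theorem stmt_10 (δ : ℝ) (hδ : 0 < δ) (k : ℕ) (hk : 2 ≤ k) :
    ∃ C : ℝ, 0 < C ∧
      ∀ ν : ℕ, ∀ t : ℝ, 1 ≤ t →
        0 ≤ (-1 : ℝ) ^ (k - 1) *
            iteratedDeriv k (fun s : ℝ => (1 - (1 + s / 2 ^ ν) ^ (-δ)) / δ) t ∧
        (-1 : ℝ) ^ (k - 1) *
            iteratedDeriv k (fun s : ℝ => (1 - (1 + s / 2 ^ ν) ^ (-δ)) / δ) t
          ≤ C * t ^ (-(k : ℝ)) * ((1 - (1 + t / 2 ^ ν) ^ (-δ)) / δ) := by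
  obtain ⟨m, rfl⟩ : ∃ m, k = m + 1 := ⟨k - 1, (Nat.succ_pred_eq_of_pos (by omega)).symm⟩
  set c := min (1 - 2 ^ (-δ)) (min δ 1 / 2) with hcdef
  have hc0 : 0 < c := by
    apply lt_min
    · have : (2:ℝ) ^ (-δ) < 1 := by
        apply Real.rpow_lt_one_of_one_lt_of_neg one_lt_two (by linarith)
      linarith
    · positivity
  set P := ∏ i ∈ Finset.range m, (δ + 1 + (i:ℝ)) with hPdef
  have hP0 : 0 < P := Finset.prod_pos fun i _ => by positivity
  refine ⟨P * δ / c, by positivity, fun ν t ht => ?_⟩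
  set a : ℝ := 2 ^ ν with hadef
  have ha1 : (1:ℝ) ≤ a := one_le_pow₀ one_le_two
  have ha0 : (0:ℝ) < a := by linarith
  have ht0 : (0:ℝ) < t := by linarith
  have hta : -a < t := by linarith
  have hform := iter_formula δ a hδ ha0 m t hta
  have hb0 : (0:ℝ) < 1 + t / a := by positivity
  have hb1 : (1:ℝ) ≤ 1 + t / a := by
    have : 0 ≤ t / a := by positivity
    linarith
  rw [Nat.add_sub_cancel, hform]
  have hsq : (-1 : ℝ) ^ m * ((-1 : ℝ) ^ m * P * (a⁻¹) ^ (m + 1)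
      * (1 + t / a) ^ (-(δ + (m : ℝ) + 1)))
      = P * (a⁻¹) ^ (m + 1) * (1 + t / a) ^ (-(δ + (m : ℝ) + 1)) := by
    have : (-1 : ℝ) ^ m * (-1 : ℝ) ^ m = 1 := by
      rw [← pow_add]; exact Even.neg_one_pow ⟨m, rfl⟩
    calc (-1 : ℝ) ^ m * ((-1 : ℝ) ^ m * P * (a⁻¹) ^ (m + 1)
        * (1 + t / a) ^ (-(δ + (m : ℝ) + 1)))
        = ((-1 : ℝ) ^ m * (-1 : ℝ) ^ m) * (P * (a⁻¹) ^ (m + 1)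
          * (1 + t / a) ^ (-(δ + (m : ℝ) + 1))) := by ring
      _ = _ := by rw [this]; ring
  rw [hsq]
  constructor
  · positivity
  · -- rewrite rpow pieces
    have h2 : (1 + t / a) ^ (-((m + 1 : ℕ) : ℝ)) = ((1 + t / a) ^ (m + 1))⁻¹ := by
      rw [Real.rpow_neg hb0.le, Real.rpow_natCast]
    have hsplit : (1 + t / a) ^ (-(δ + (m : ℝ) + 1))
        = (1 + t / a) ^ (-δ) * ((1 + t / a) ^ (m + 1))⁻¹ := by
      rw [show -(δ + (m : ℝ) + 1) = -δ + (-((m + 1 : ℕ) : ℝ)) by push_cast; ring,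
        Real.rpow_add hb0, h2]
    have hinv : (a⁻¹) ^ (m + 1) * ((1 + t / a) ^ (m + 1))⁻¹ = ((a + t) ^ (m + 1))⁻¹ := by
      rw [inv_pow, ← mul_inv, ← mul_pow]
      congr 2
      field_simp
    have htpow : t ^ (-((m + 1 : ℕ) : ℝ)) = (t ^ (m + 1))⁻¹ := by
      rw [Real.rpow_neg ht0.le, Real.rpow_natCast]
    rw [hsplit, htpow]
    have hXA := key_ineq δ a t hδ ha1 ht m
    rw [← hcdef] at hXA
    set X := 1 - (1 + t / a) ^ (-δ) with hXdef
    set A := (a + t) ^ (m + 1) with hAdef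
    set T := t ^ (m + 1) with hTdef
    have hA0 : (0:ℝ) < A := by positivity
    have hT0 : (0:ℝ) < T := by positivity
    have hX0 : 0 < X := by
      by_contra h
      push_neg at h
      nlinarith [mul_pos hc0 hT0]
    have hy1 : (1 + t / a) ^ (-δ) ≤ 1 :=
      Real.rpow_le_one_of_one_le_of_nonpos hb1 (by linarith)
    have hAinv : A⁻¹ ≤ X / (c * T) := by
      rw [inv_eq_one_div, div_le_div_iff₀ hA0 (by positivity)]
      linarith
    calc P * (a⁻¹) ^ (m + 1) * ((1 + t / a) ^ (-δ) * ((1 + t / a) ^ (m + 1))⁻¹)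
        = P * (1 + t / a) ^ (-δ) * A⁻¹ := by
          rw [hAdef, ← hinv]; ring
      _ ≤ P * 1 * (X / (c * T)) := by
          gcongr
      _ = P * δ / c * T⁻¹ * (X / δ) := by
          field_simp
end
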